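/- Let L_X, L_Y be Laplacians of connected graphs on the same N-node set, and let d_X(p,q) = e_{p,q}ᵀL_X⁺e_{p,q} and d_Y(p,q) = e_{p,q}ᵀL_Y⁺e_{p,q} be effective-resistance distances. If κ = max(λ_max(L_Y⁺L_X), λ_max(L_X⁺L_Y)), then for all distinct p,q: (1/κ)d_X(p,q) ≤ d_Y(p,q) ≤ κ d_X(p,q). -/

import Mathlib

/-!
Write `L_X = S²` with `S = √L_X`. Since `X` is connected, `ker L_X` is spanned by the all-ones
vector, to which `e = e_p - e_q` is orthogonal; hence `L_X L_X⁺ e = e`. Putting `w = S L_X⁺ e`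
this gives `d_X(p,q) = wᵀw` and `d_Y(p,q) = wᵀ (S L_Y⁺ S) w`. The nonzero eigenvalues of
`S (L_Y⁺ S)` are those of `(L_Y⁺ S) S = L_Y⁺ L_X`, so the Rayleigh quotient bound gives
`d_Y ≤ λ_max(L_Y⁺ L_X) d_X`; exchanging `X` and `Y` gives the other inequality.
-/

open Matrix

/-- `B` is the Moore–Penrose pseudoinverse of `A`. -/
def IsMoorePenroseInv {N : ℕ} (A B : Matrix (Fin N) (Fin N) ℝ) : Prop :=
  A * B * A = A ∧ B * A * B = B ∧ (A * B)ᵀ = A * B ∧ (B * A)ᵀ = B * A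

namespace IsMoorePenroseInv

variable {N : ℕ} {A B C : Matrix (Fin N) (Fin N) ℝ}

theorem transpose (h : IsMoorePenroseInv A B) : IsMoorePenroseInv Aᵀ Bᵀ := by
  obtain ⟨h₁, h₂, h₃, h₄⟩ := h
  refine ⟨?_, ?_, ?_, ?_⟩
  · rw [← transpose_mul, ← transpose_mul, ← Matrix.mul_assoc, h₁]
  · rw [← transpose_mul, ← transpose_mul, ← Matrix.mul_assoc, h₂]
  · rw [← transpose_mul, transpose_transpose, h₄]
  · rw [← transpose_mul, transpose_transpose, h₃]

theorem self_mul_eq_self_mul (hB : IsMoorePenroseInv A B) (hC : IsMoorePenroseInv A C) :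
    A * B = A * C := by
  obtain ⟨hB₁, -, hB₃, -⟩ := hB
  obtain ⟨hC₁, -, hC₃, -⟩ := hC
  calc A * B = (A * C * (A * B))ᵀ := by rw [← Matrix.mul_assoc, hC₁, hB₃]
    _ = A * B * (A * C) := by rw [transpose_mul, hB₃, hC₃]
    _ = A * C := by rw [← Matrix.mul_assoc, hB₁]

theorem unique (hB : IsMoorePenroseInv A B) (hC : IsMoorePenroseInv A C) : B = C := by
  have hBA : B * A = C * A := by
    simpa using congrArg Matrix.transpose
      (self_mul_eq_self_mul hB.transpose hC.transpose)
  calc B = C * A * B := by rw [← hBA, hB.2.1]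
    _ = C := by rw [Matrix.mul_assoc, self_mul_eq_self_mul hB hC, ← Matrix.mul_assoc, hC.2.1]

theorem isSymm (hA : A.IsSymm) (h : IsMoorePenroseInv A B) : B.IsSymm :=
  unique (hA.eq ▸ h.transpose) h

theorem mul_comm_of_isSymm (hA : A.IsSymm) (h : IsMoorePenroseInv A B) : A * B = B * A := by
  rw [← h.2.2.2, transpose_mul, hA.eq, (h.isSymm hA).eq]

theorem mul_mulVec_eq_self (h : IsMoorePenroseInv A B) {x : Fin N → ℝ}
    (hx : ∀ v, A *ᵥ v = 0 → v ⬝ᵥ x = 0) : (B * A) *ᵥ x = x := by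
  set r := x - (B * A) *ᵥ x
  have hr : A *ᵥ r = 0 := by
    rw [mulVec_sub, mulVec_mulVec, ← Matrix.mul_assoc, h.1, sub_self]
  have hr_perp : r ⬝ᵥ (B * A) *ᵥ x = 0 := by
    rw [dotProduct_mulVec, ← h.2.2.2, vecMul_transpose, ← mulVec_mulVec, hr, mulVec_zero,
      zero_dotProduct]
  have : r ⬝ᵥ r = 0 := by
    rw [dotProduct_sub, hx r hr, hr_perp, sub_self]
  exact (sub_eq_zero.mp (dotProduct_self_eq_zero.mp this)).symm

end IsMoorePenroseInv

namespace Matrix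

variable {n : Type*} [Fintype n] [DecidableEq n]

theorem hasEigenvalue_mulVecLin_iff_mem_spectrum {K : Type*} [Field K] {A : Matrix n n K}
    {μ : K} : Module.End.HasEigenvalue A.mulVecLin μ ↔ μ ∈ spectrum K A := by
  rw [← toLin'_apply', Module.End.hasEigenvalue_iff_mem_spectrum, spectrum_toLin']

open scoped MatrixOrder in
theorem IsHermitian.dotProduct_mulVec_le {M : Matrix n n ℝ} (hM : M.IsHermitian) {c : ℝ}
    (hc : ∀ μ ∈ spectrum ℝ M, μ ≤ c) (w : n → ℝ) : w ⬝ᵥ M *ᵥ w ≤ c * (w ⬝ᵥ w) := by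
  have hle : M ≤ algebraMap ℝ _ c := (le_algebraMap_iff_spectrum_le hM.isSelfAdjoint).mpr hc
  have := (Matrix.le_iff.mp hle).dotProduct_mulVec_nonneg w
  rwa [star_trivial, Algebra.algebraMap_eq_smul_one, sub_mulVec, dotProduct_sub, sub_nonneg,
    smul_mulVec, one_mulVec, dotProduct_smul, smul_eq_mul] at this

open scoped MatrixOrder in
theorem PosSemidef.mulVec_dotProduct_mulVec_le {L Y : Matrix n n ℝ} (hL : L.PosSemidef)
    (hY : Y.IsSymm) {c : ℝ} (hc₀ : 0 ≤ c) (hc : ∀ μ ∈ spectrum ℝ (Y * L), μ ≤ c)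
    (v : n → ℝ) : (L *ᵥ v) ⬝ᵥ Y *ᵥ (L *ᵥ v) ≤ c * (v ⬝ᵥ L *ᵥ v) := by
  set S := CFC.sqrt L
  have hS : Sᵀ = S := isHermitian_iff_isSymm.mp (CFC.sqrt_nonneg L).posSemidef.isHermitian
  have hSS : S * S = L := CFC.sqrt_mul_sqrt_self L hL.nonneg
  have hSYS : (S * Y * S).IsHermitian := by
    rw [isHermitian_iff_isSymm, IsSymm, transpose_mul, transpose_mul, hS, hY.eq,
      Matrix.mul_assoc]
  have hspec : ∀ μ ∈ spectrum ℝ (S * Y * S), μ ≤ c := by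
    intro μ hμ
    by_cases h₀ : μ = 0
    · exact h₀ ▸ hc₀
    have : μ ∈ spectrum ℝ (S * (Y * S)) \ {0} := ⟨by rwa [← Matrix.mul_assoc], h₀⟩
    rw [spectrum.nonzero_mul_comm, Matrix.mul_assoc, hSS] at this
    exact hc μ this.1
  have hLv : L *ᵥ v = S *ᵥ (S *ᵥ v) := by rw [mulVec_mulVec, hSS]
  calc (L *ᵥ v) ⬝ᵥ Y *ᵥ (L *ᵥ v) = (S *ᵥ v) ⬝ᵥ (S * Y * S) *ᵥ (S *ᵥ v) := by
        rw [hLv, ← mulVec_mulVec, ← mulVec_mulVec, dotProduct_mulVec _ S, ← mulVec_transpose, hS]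
    _ ≤ c * ((S *ᵥ v) ⬝ᵥ (S *ᵥ v)) := hSYS.dotProduct_mulVec_le hspec _
    _ = c * (v ⬝ᵥ L *ᵥ v) := by
        rw [hLv, dotProduct_mulVec v S, ← mulVec_transpose, hS]

end Matrix

namespace SimpleGraph

section

variable {V : Type*} [Fintype V] [DecidableEq V] {G : SimpleGraph V} [DecidableRel G.Adj]

theorem hasEigenvalue_mul_lapMatrix_zero [Nonempty V] (B : Matrix V V ℝ) :
    Module.End.HasEigenvalue (B * G.lapMatrix ℝ).mulVecLin 0 := by
  refine Module.End.hasEigenvalue_of_hasEigenvector (x := fun _ ↦ 1) ⟨?_, ?_⟩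
  · rw [Module.End.mem_eigenspace_iff, mulVecLin_apply, ← mulVec_mulVec,
      lapMatrix_mulVec_const_eq_zero, mulVec_zero, zero_smul]
  · exact Function.ne_iff.mpr ⟨Classical.arbitrary V, one_ne_zero⟩

theorem Connected.dotProduct_eq_zero_of_lapMatrix_mulVec_eq_zero (hG : G.Connected)
    {v x : V → ℝ} (hv : G.lapMatrix ℝ *ᵥ v = 0) (hx : ∑ i, x i = 0) : v ⬝ᵥ x = 0 := by
  obtain ⟨i₀⟩ := hG.nonempty
  have hconst : v = fun _ ↦ v i₀ := funext fun i ↦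
    (G.lapMatrix_mulVec_eq_zero_iff_forall_reachable.mp hv) i i₀ (hG.preconnected i i₀)
  rw [hconst, dotProduct, ← Finset.mul_sum, hx, mul_zero]

end

variable {N : ℕ} {G : SimpleGraph (Fin N)} [DecidableRel G.Adj] {B : Matrix (Fin N) (Fin N) ℝ}
  {x : Fin N → ℝ}

theorem Connected.lapMatrix_mulVec_mulVec_eq_self (hG : G.Connected)
    (hB : IsMoorePenroseInv (G.lapMatrix ℝ) B) (hx : ∑ i, x i = 0) :
    G.lapMatrix ℝ *ᵥ (B *ᵥ x) = x := by
  rw [mulVec_mulVec, hB.mul_comm_of_isSymm (G.isSymm_lapMatrix ℝ)]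
  exact hB.mul_mulVec_eq_self fun v hv ↦ hG.dotProduct_eq_zero_of_lapMatrix_mulVec_eq_zero hv hx

theorem Connected.dotProduct_mulVec_nonneg (hG : G.Connected)
    (hB : IsMoorePenroseInv (G.lapMatrix ℝ) B) (hx : ∑ i, x i = 0) : 0 ≤ x ⬝ᵥ B *ᵥ x := by
  have h := (G.posSemidef_lapMatrix ℝ).dotProduct_mulVec_nonneg (B *ᵥ x)
  rwa [star_trivial, hG.lapMatrix_mulVec_mulVec_eq_self hB hx, dotProduct_comm] at h

theorem Connected.dotProduct_mulVec_le_mul (hG : G.Connected)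
    (hB : IsMoorePenroseInv (G.lapMatrix ℝ) B) {Y : Matrix (Fin N) (Fin N) ℝ} (hY : Y.IsSymm)
    {c : ℝ} (hc : ∀ μ, Module.End.HasEigenvalue (Y * G.lapMatrix ℝ).mulVecLin μ → μ ≤ c)
    (hx : ∑ i, x i = 0) : x ⬝ᵥ Y *ᵥ x ≤ c * (x ⬝ᵥ B *ᵥ x) := by
  have : Nonempty (Fin N) := hG.nonempty
  have hLB := hG.lapMatrix_mulVec_mulVec_eq_self hB hx
  calc x ⬝ᵥ Y *ᵥ x = (G.lapMatrix ℝ *ᵥ (B *ᵥ x)) ⬝ᵥ Y *ᵥ (G.lapMatrix ℝ *ᵥ (B *ᵥ x)) := by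
        rw [hLB]
    _ ≤ c * ((B *ᵥ x) ⬝ᵥ G.lapMatrix ℝ *ᵥ (B *ᵥ x)) :=
        (G.posSemidef_lapMatrix ℝ).mulVec_dotProduct_mulVec_le hY
          (hc 0 (hasEigenvalue_mul_lapMatrix_zero Y))
          (fun μ hμ ↦ hc μ (hasEigenvalue_mulVecLin_iff_mem_spectrum.mpr hμ)) _
    _ = c * (x ⬝ᵥ B *ᵥ x) := by rw [hLB, dotProduct_comm]

end SimpleGraph

theorem one_div_max_mul_le_and_le_max_mul {x y a b : ℝ} (hx : 0 ≤ x) (hy : 0 ≤ y)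
    (hyx : y ≤ a * x) (hxy : x ≤ b * y) : 1 / max a b * x ≤ y ∧ y ≤ max a b * x := by
  refine ⟨?_, hyx.trans (mul_le_mul_of_nonneg_right (le_max_left a b) hx)⟩
  rcases le_or_gt (max a b) 0 with h | h
  · exact (mul_nonpos_of_nonpos_of_nonneg (one_div_nonpos.mpr h) hx).trans hy
  · rw [one_div, inv_mul_le_iff₀ h]
    exact hxy.trans (mul_le_mul_of_nonneg_right (le_max_right a b) hy)

theorem effective_resistance_bi_lipschitz_general (N : ℕ)
    (GX GY : SimpleGraph (Fin N)) [DecidableRel GX.Adj] [DecidableRel GY.Adj]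
    (hGX : GX.Connected) (hGY : GY.Connected)
    (Xp Yp : Matrix (Fin N) (Fin N) ℝ)
    (hXp : IsMoorePenroseInv (GX.lapMatrix ℝ) Xp)
    (hYp : IsMoorePenroseInv (GY.lapMatrix ℝ) Yp)
    (lamYX lamXY : ℝ)
    (hlamYX_max : ∀ μ : ℝ,
      Module.End.HasEigenvalue (Matrix.mulVecLin (Yp * GX.lapMatrix ℝ)) μ → μ ≤ lamYX)
    (hlamXY_max : ∀ μ : ℝ,
      Module.End.HasEigenvalue (Matrix.mulVecLin (Xp * GY.lapMatrix ℝ)) μ → μ ≤ lamXY)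
    (κ : ℝ) (hκ : κ = max lamYX lamXY) :
    ∀ p q : Fin N, p ≠ q →
      (1 / κ) * ((Pi.single p 1 - Pi.single q 1) ⬝ᵥ
          Xp.mulVec (Pi.single p 1 - Pi.single q 1)) ≤
        (Pi.single p 1 - Pi.single q 1) ⬝ᵥ Yp.mulVec (Pi.single p 1 - Pi.single q 1) ∧
      (Pi.single p 1 - Pi.single q 1) ⬝ᵥ Yp.mulVec (Pi.single p 1 - Pi.single q 1) ≤
        κ * ((Pi.single p 1 - Pi.single q 1) ⬝ᵥ
          Xp.mulVec (Pi.single p 1 - Pi.single q 1)) := by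
  intro p q _
  have he : ∑ i, (Pi.single p 1 - Pi.single q 1 : Fin N → ℝ) i = 0 := by
    simp [Finset.sum_sub_distrib]
  have hXsymm := hXp.isSymm (GX.isSymm_lapMatrix ℝ)
  have hYsymm := hYp.isSymm (GY.isSymm_lapMatrix ℝ)
  subst hκ
  exact one_div_max_mul_le_and_le_max_mul (hGX.dotProduct_mulVec_nonneg hXp he)
    (hGY.dotProduct_mulVec_nonneg hYp he) (hGX.dotProduct_mulVec_le_mul hXp hYsymm hlamYX_max he)
    (hGY.dotProduct_mulVec_le_mul hYp hXsymm hlamXY_max he)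

/-- With κ = max(λ_max(L_Y⁺L_X), λ_max(L_X⁺L_Y)), the effective-resistance distances
satisfy the κ-bi-Lipschitz bound `(1/κ) d_X(p,q) ≤ d_Y(p,q) ≤ κ d_X(p,q)`. -/
theorem effective_resistance_bi_lipschitz (N : ℕ)
    (GX GY : SimpleGraph (Fin N)) [DecidableRel GX.Adj] [DecidableRel GY.Adj]
    (hGX : GX.Connected) (hGY : GY.Connected)
    (Xp Yp : Matrix (Fin N) (Fin N) ℝ)
    (hXp : IsMoorePenroseInv (GX.lapMatrix ℝ) Xp)
    (hYp : IsMoorePenroseInv (GY.lapMatrix ℝ) Yp)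
    (lamYX lamXY : ℝ)
    (hlamYX : Module.End.HasEigenvalue
      (Matrix.mulVecLin (Yp * GX.lapMatrix ℝ)) lamYX)
    (hlamYX_max : ∀ μ : ℝ,
      Module.End.HasEigenvalue (Matrix.mulVecLin (Yp * GX.lapMatrix ℝ)) μ → μ ≤ lamYX)
    (hlamXY : Module.End.HasEigenvalue
      (Matrix.mulVecLin (Xp * GY.lapMatrix ℝ)) lamXY)
    (hlamXY_max : ∀ μ : ℝ,
      Module.End.HasEigenvalue (Matrix.mulVecLin (Xp * GY.lapMatrix ℝ)) μ → μ ≤ lamXY)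
    (κ : ℝ) (hκ : κ = max lamYX lamXY) :
    ∀ p q : Fin N, p ≠ q →
      (1 / κ) * ((Pi.single p 1 - Pi.single q 1) ⬝ᵥ
          Xp.mulVec (Pi.single p 1 - Pi.single q 1)) ≤
        (Pi.single p 1 - Pi.single q 1) ⬝ᵥ Yp.mulVec (Pi.single p 1 - Pi.single q 1) ∧
      (Pi.single p 1 - Pi.single q 1) ⬝ᵥ Yp.mulVec (Pi.single p 1 - Pi.single q 1) ≤
        κ * ((Pi.single p 1 - Pi.single q 1) ⬝ᵥ
          Xp.mulVec (Pi.single p 1 - Pi.single q 1)) :=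
  effective_resistance_bi_lipschitz_general N GX GY hGX hGY Xp Yp hXp hYp lamYX lamXY hlamYX_max
    hlamXY_max κ hκ
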